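/- A continuous piecewise-linear function φ : ℝ → ℝ whose slope sequence (s_0, ..., s_k) is not a palindrome (i.e., s_i ≠ s_{k-i} for some i) and all of whose slopes are positive admits no pair (α, β) with α(x) = -x + a, β(y) = δy + b, δ ∈ {±1}, and β ∘ φ = φ ∘ α; hence its automorphism group is trivial. -/
import Mathlib

/-- φ is affine with slope σ on a neighborhood of p. -/
def AffNear (φ : ℝ → ℝ) (p σ : ℝ) : Prop :=
  ∃ ε > 0, ∃ d, ∀ t, |t - p| < ε → φ t = σ * t + d

lemma slope_eq' {σ d σ' d' t1 t2 : ℝ} (h : t1 ≠ t2)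
    (h1 : σ * t1 + d = σ' * t1 + d') (h2 : σ * t2 + d = σ' * t2 + d') : σ = σ' := by
  have hz : (σ - σ') * (t1 - t2) = 0 := by linear_combination h1 - h2
  rcases mul_eq_zero.mp hz with h' | h'
  · linarith [sub_eq_zero.mp h']
  · exact absurd (sub_eq_zero.mp h') h

lemma affNear_unique {φ : ℝ → ℝ} {p σ σ' : ℝ}
    (h : AffNear φ p σ) (h' : AffNear φ p σ') : σ = σ' := by
  obtain ⟨ε, hε, d, hd⟩ := h
  obtain ⟨ε', hε', d', hd'⟩ := h'
  set η := min ε ε' / 2 with hη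
  have hηpos : 0 < η := by
    have := lt_min hε hε'
    rw [hη]; positivity
  have hηε : η < ε := by
    have h1 : min ε ε' ≤ ε := min_le_left _ _
    rw [hη]; linarith
  have hηε' : η < ε' := by
    have h1 : min ε ε' ≤ ε' := min_le_right _ _
    rw [hη]; linarith
  have e1 : σ * p + d = σ' * p + d' := by
    have a1 := hd p (by simp [abs_of_nonneg]; exact hε)
    have a2 := hd' p (by simp [abs_of_nonneg]; exact hε')
    rw [← a1, ← a2]
  have e2 : σ * (p + η) + d = σ' * (p + η) + d' := by
    have hb : |p + η - p| < ε := by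
      rw [show p + η - p = η by ring, abs_of_pos hηpos]; exact hηε
    have hb' : |p + η - p| < ε' := by
      rw [show p + η - p = η by ring, abs_of_pos hηpos]; exact hηε'
    have a1 := hd (p + η) hb
    have a2 := hd' (p + η) hb'
    rw [← a1, ← a2]
  exact slope_eq' (by intro hcon; nlinarith) e1 e2

/-- A continuous piecewise-linear φ with positive slopes whose slope sequence is not
a palindrome admits no pair α(x) = -x + a, β(y) = δy + b with β ∘ φ = φ ∘ α; and
its automorphism group is trivial: any pair of affine maps x ↦ ±x + c intertwining
φ is the pair of identities. -/
theorem nonpalindromic_trivial_aut (k : ℕ) (hk : 1 ≤ k)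
    (x : ℕ → ℝ) (hx : ∀ i, 1 ≤ i → i < k → x i < x (i + 1))
    (s : ℕ → ℤ) (hspos : ∀ i ≤ k, 0 < s i)
    (hbreak : ∀ i < k, s (i + 1) ≠ s i)
    (hnonpal : ∃ i ≤ k, s i ≠ s (k - i))
    (φ : ℝ → ℝ) (hcont : Continuous φ)
    (c : ℕ → ℝ)
    (hslope : ∀ i ≤ k, ∀ t : ℝ,
      (i = 0 ∨ x i < t) → (i = k ∨ t < x (i + 1)) → φ t = (s i : ℝ) * t + c i) :
    (¬ ∃ a b δ : ℝ, (δ = 1 ∨ δ = -1) ∧ ∀ t : ℝ, δ * φ t + b = φ (-t + a)) ∧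
    (∀ ε a δ b : ℝ, (ε = 1 ∨ ε = -1) → (δ = 1 ∨ δ = -1) →
      (∀ t : ℝ, δ * φ t + b = φ (ε * t + a)) →
      ε = 1 ∧ a = 0 ∧ δ = 1 ∧ b = 0) := by
  -- positivity of real slopes
  have hsR : ∀ i, i ≤ k → (0 : ℝ) < (s i : ℝ) := fun i hi => by exact_mod_cast hspos i hi
  -- extended monotonicity of breakpoints
  have hxm : ∀ j m : ℕ, 1 ≤ j → j < m → m ≤ k → x j < x m := by
    intro j m
    induction m with
    | zero => omega
    | succ n ih =>
      intro h1 h2 h3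
      rcases Nat.lt_or_ge j n with h | h
      · exact (ih h1 h (by omega)).trans (hx n (by omega) (by omega))
      · have hjn : j = n := by omega
        subst hjn
        exact hx j h1 (by omega)
  -- φ is affine near every point in the interior of a piece
  have hA : ∀ i, i ≤ k → ∀ p : ℝ, (i = 0 ∨ x i < p) → (i = k ∨ p < x (i + 1)) →
      AffNear φ p ((s i : ℝ)) := by
    intro i hik p hl hr
    have hε1 : ∃ ε1 > (0:ℝ), ∀ t : ℝ, |t - p| < ε1 → (i = 0 ∨ x i < t) := by
      rcases hl with h | h
      · exact ⟨1, one_pos, fun t _ => Or.inl h⟩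
      · refine ⟨p - x i, by linarith, fun t ht => Or.inr ?_⟩
        have := abs_lt.mp ht
        linarith [this.1]
    have hε2 : ∃ ε2 > (0:ℝ), ∀ t : ℝ, |t - p| < ε2 → (i = k ∨ t < x (i + 1)) := by
      rcases hr with h | h
      · exact ⟨1, one_pos, fun t _ => Or.inl h⟩
      · refine ⟨x (i + 1) - p, by linarith, fun t ht => Or.inr ?_⟩
        have := abs_lt.mp ht
        linarith [this.2]
    obtain ⟨ε1, h1pos, h1⟩ := hε1
    obtain ⟨ε2, h2pos, h2⟩ := hε2
    exact ⟨min ε1 ε2, lt_min h1pos h2pos, c i, fun t ht =>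
      hslope i hik t (h1 t (ht.trans_le (min_le_left _ _))) (h2 t (ht.trans_le (min_le_right _ _)))⟩
  -- every non-breakpoint lies in the interior of some piece
  have hD : ∀ p : ℝ, (∀ j, 1 ≤ j → j ≤ k → p ≠ x j) →
      ∃ i, i ≤ k ∧ (i = 0 ∨ x i < p) ∧ (i = k ∨ p < x (i + 1)) := by
    intro p hp
    by_cases h1 : x 1 < p
    · set F := (Finset.Icc 1 k).filter (fun j => x j < p) with hF
      have hFne : F.Nonempty := ⟨1, by simp [hF, Finset.mem_filter, Finset.mem_Icc, hk, h1]⟩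
      set i := F.max' hFne with hi
      have hiF : i ∈ F := F.max'_mem hFne
      have hi1 : (1 ≤ i ∧ i ≤ k) ∧ x i < p := by
        simpa [hF, Finset.mem_filter, Finset.mem_Icc] using hiF
      refine ⟨i, hi1.1.2, Or.inr hi1.2, ?_⟩
      by_cases hik : i = k
      · exact Or.inl hik
      · refine Or.inr ?_
        have hnm : i + 1 ∉ F := fun hmem => absurd (F.le_max' _ hmem) (by omega)
        have hnotlt : ¬ x (i + 1) < p := by
          intro hlt
          exact hnm (Finset.mem_filter.mpr ⟨Finset.mem_Icc.mpr ⟨by omega, by omega⟩, hlt⟩)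
        have hne := hp (i + 1) (by omega) (by omega)
        rcases lt_or_eq_of_le (le_of_not_gt hnotlt) with h | h
        · exact h
        · exact absurd h hne
    · refine ⟨0, Nat.zero_le k, Or.inl rfl, Or.inr ?_⟩
      have hne := hp 1 le_rfl hk
      have : p ≤ x 1 := le_of_not_gt h1
      have : p < x 1 := lt_of_le_of_ne this hne
      exact this
  -- φ is not affine near any breakpoint
  have hC : ∀ j, 1 ≤ j → j ≤ k → ∀ σ : ℝ, ¬ AffNear φ (x j) σ := by
    rintro j hj1 hjk σ ⟨ε, hε, d, hd⟩
    -- right side: slope s j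
    have hside : ∃ η > (0:ℝ), ∀ t : ℝ, x j < t → t < x j + η → φ t = (s j : ℝ) * t + c j := by
      by_cases hjlt : j < k
      · have hxx := hx j hj1 hjlt
        exact ⟨x (j + 1) - x j, by linarith, fun t ht1 ht2 =>
          hslope j hjk t (Or.inr ht1) (Or.inr (by linarith))⟩
      · have hjk' : j = k := by omega
        exact ⟨1, one_pos, fun t ht1 _ => hslope j hjk t (Or.inr ht1) (Or.inl hjk')⟩
    obtain ⟨η, hη, hr⟩ := hside
    have hσr : σ = (s j : ℝ) := by
      set θ := min ε η with hθ
      have hθpos : 0 < θ := lt_min hε hη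
      have hθε : θ ≤ ε := min_le_left _ _
      have hθη : θ ≤ η := min_le_right _ _
      have e1 : σ * (x j + θ/3) + d = (s j : ℝ) * (x j + θ/3) + c j := by
        rw [← hd (x j + θ/3) (by rw [show x j + θ/3 - x j = θ/3 by ring, abs_of_pos (by linarith)]; linarith)]
        exact hr _ (by linarith) (by linarith)
      have e2 : σ * (x j + 2*θ/3) + d = (s j : ℝ) * (x j + 2*θ/3) + c j := by
        rw [← hd (x j + 2*θ/3) (by rw [show x j + 2*θ/3 - x j = 2*θ/3 by ring, abs_of_pos (by linarith)]; linarith)]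
        exact hr _ (by linarith) (by linarith)
      exact slope_eq' (by intro hcon; nlinarith) e1 e2
    -- left side: slope s (j-1)
    have hside' : ∃ η' > (0:ℝ), ∀ t : ℝ, x j - η' < t → t < x j → φ t = (s (j-1) : ℝ) * t + c (j-1) := by
      by_cases hj2 : 2 ≤ j
      · have hxx := hxm (j - 1) j (by omega) (by omega) hjk
        refine ⟨x j - x (j - 1), by linarith, fun t ht1 ht2 => ?_⟩
        have hj' : j - 1 + 1 = j := by omega
        have := hslope (j - 1) (by omega) t (Or.inr (by linarith)) (Or.inr (by rw [hj']; exact ht2))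
        exact this
      · have hj1' : j = 1 := by omega
        subst hj1'
        refine ⟨1, one_pos, fun t _ ht2 => ?_⟩
        have := hslope 0 (by omega) t (Or.inl rfl) (Or.inr (by norm_num; exact ht2))
        simpa using this
    obtain ⟨η', hη', hl⟩ := hside'
    have hσl : σ = (s (j-1) : ℝ) := by
      set θ := min ε η' with hθ
      have hθpos : 0 < θ := lt_min hε hη'
      have hθε : θ ≤ ε := min_le_left _ _
      have hθη : θ ≤ η' := min_le_right _ _
      have e1 : σ * (x j - θ/3) + d = (s (j-1) : ℝ) * (x j - θ/3) + c (j-1) := by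
        rw [← hd (x j - θ/3) (by rw [show x j - θ/3 - x j = -(θ/3) by ring, abs_neg, abs_of_pos (by linarith)]; linarith)]
        exact hl _ (by linarith) (by linarith)
      have e2 : σ * (x j - 2*θ/3) + d = (s (j-1) : ℝ) * (x j - 2*θ/3) + c (j-1) := by
        rw [← hd (x j - 2*θ/3) (by rw [show x j - 2*θ/3 - x j = -(2*θ/3) by ring, abs_neg, abs_of_pos (by linarith)]; linarith)]
        exact hl _ (by linarith) (by linarith)
      exact slope_eq' (by intro hcon; nlinarith) e1 e2
    have hcast : (s j : ℝ) = (s (j - 1) : ℝ) := by rw [← hσr, hσl]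
    have hZ : s j = s (j - 1) := by exact_mod_cast hcast
    have hbr := hbreak (j - 1) (by omega)
    rw [show j - 1 + 1 = j by omega] at hbr
    exact hbr hZ
  -- Part 1
  have part1 : ¬ ∃ a b δ : ℝ, (δ = 1 ∨ δ = -1) ∧ ∀ t : ℝ, δ * φ t + b = φ (-t + a) := by
    rintro ⟨a, b, δ, hδ, hcomm⟩
    have hs0 := hsR 0 (Nat.zero_le k)
    have hsk := hsR k le_rfl
    rcases hδ with rfl | rfl
    · -- δ = 1 : impossible since slopes at ±∞ are positive
      set t0 := max (x k) (a - x 1) + 1 with ht0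
      have h0k : x k < t0 := by
        have := le_max_left (x k) (a - x 1); rw [ht0]; linarith
      have h0a : -t0 + a < x 1 := by
        have := le_max_right (x k) (a - x 1); rw [ht0]; linarith
      have h1k : x k < t0 + 1 := by linarith
      have h1a : -(t0 + 1) + a < x 1 := by linarith
      have e0 : φ t0 = (s k : ℝ) * t0 + c k := hslope k le_rfl t0 (Or.inr h0k) (Or.inl rfl)
      have e1 : φ (t0 + 1) = (s k : ℝ) * (t0 + 1) + c k :=
        hslope k le_rfl (t0 + 1) (Or.inr h1k) (Or.inl rfl)
      have f0 : φ (-t0 + a) = (s 0 : ℝ) * (-t0 + a) + c 0 :=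
        hslope 0 (Nat.zero_le k) _ (Or.inl rfl) (Or.inr (by norm_num; linarith))
      have f1 : φ (-(t0 + 1) + a) = (s 0 : ℝ) * (-(t0 + 1) + a) + c 0 :=
        hslope 0 (Nat.zero_le k) _ (Or.inl rfl) (Or.inr (by norm_num; linarith))
      have g0 := hcomm t0
      have g1 := hcomm (t0 + 1)
      rw [e0, f0] at g0
      rw [e1, f1] at g1
      have : (s k : ℝ) = -(s 0 : ℝ) := by linear_combination g1 - g0
      linarith
    · -- δ = -1 : the reflection argument
      have H : ∀ t : ℝ, φ (a - t) = b - φ t := by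
        intro t
        have := hcomm t
        rw [show -t + a = a - t by ring] at this
        linarith
      -- transfer of affine neighborhoods under the reflection
      have htrans : ∀ p σ : ℝ, AffNear φ p σ → AffNear φ (a - p) σ := by
        rintro p σ ⟨ε, hε, d, hd⟩
        refine ⟨ε, hε, b - σ * a - d, fun u hu => ?_⟩
        have h1 : |a - u - p| < ε := by
          rw [abs_sub_lt_iff] at hu ⊢
          constructor <;> linarith [hu.1, hu.2]
        have h2 := hd (a - u) h1
        have h3 := H (a - u)
        rw [show a - (a - u) = u by ring] at h3
        rw [h3, h2]; ring
      -- breakpoints map to breakpoints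
      have himg : ∀ j : ℕ, ∃ i : ℕ, (1 ≤ j ∧ j ≤ k) → (1 ≤ i ∧ i ≤ k ∧ a - x j = x i) := by
        intro j
        by_cases hj : 1 ≤ j ∧ j ≤ k
        · by_cases hbp : ∃ i, 1 ≤ i ∧ i ≤ k ∧ a - x j = x i
          · obtain ⟨i, hi⟩ := hbp; exact ⟨i, fun _ => hi⟩
          · exfalso
            push_neg at hbp
            obtain ⟨i, hik, hl, hr⟩ := hD (a - x j) hbp
            have h1 := hA i hik _ hl hr
            have h2 := htrans _ _ h1
            rw [show a - (a - x j) = x j by ring] at h2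
            exact hC j hj.1 hj.2 _ h2
        · exact ⟨0, fun h => absurd h hj⟩
      choose m hm using himg
      -- m is strictly decreasing
      have hdec : ∀ j j' : ℕ, 1 ≤ j → j < j' → j' ≤ k → m j' < m j := by
        intro j j' h1 h2 h3
        obtain ⟨hm1, hm2, hm3⟩ := hm j ⟨h1, by omega⟩
        obtain ⟨hm1', hm2', hm3'⟩ := hm j' ⟨by omega, h3⟩
        by_contra hcon
        push_neg at hcon
        have hxj : x j < x j' := hxm j j' h1 h2 h3
        have hle : x (m j) ≤ x (m j') := by
          rcases Nat.lt_or_ge (m j) (m j') with h | h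
          · exact le_of_lt (hxm _ _ hm1 h hm2')
          · have : m j = m j' := by omega
            rw [this]
        linarith
      -- gap estimate
      have hgap : ∀ d j : ℕ, 1 ≤ j → j + d ≤ k → m (j + d) + d ≤ m j := by
        intro d
        induction d with
        | zero => intro j _ _; simp
        | succ n ih =>
          intro j h1 h2
          have ha := ih j h1 (by omega)
          have hb := hdec (j + n) (j + (n + 1)) (by omega) (by omega) (by omega)
          omega
      have hm1k : m 1 = k := by
        obtain ⟨h1, h2, _⟩ := hm 1 ⟨le_rfl, hk⟩
        have hg := hgap (k - 1) 1 le_rfl (by omega)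
        obtain ⟨h1', _, _⟩ := hm (1 + (k - 1)) ⟨by omega, by omega⟩
        omega
      have hax : ∀ j, 1 ≤ j → j ≤ k → a - x j = x (k + 1 - j) := by
        intro j h1 h2
        obtain ⟨hma, hmb, hmc⟩ := hm j ⟨h1, h2⟩
        have e1 := hgap (j - 1) 1 le_rfl (by omega)
        rw [show 1 + (j - 1) = j by omega] at e1
        have e2 := hgap (k - j) j h1 (by omega)
        rw [show j + (k - j) = k by omega] at e2
        obtain ⟨hka, hkb, _⟩ := hm k ⟨hk, le_rfl⟩
        have hmj : m j = k + 1 - j := by omega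
        rw [hmj] at hmc
        exact hmc
      -- s 0 = s k
      have h0k : (s 0 : ℝ) = (s k : ℝ) := by
        have hax1 := hax 1 le_rfl hk
        rw [show k + 1 - 1 = k by omega] at hax1
        have h1 : AffNear φ (x 1 - 1) ((s 0 : ℝ)) :=
          hA 0 (Nat.zero_le k) _ (Or.inl rfl) (Or.inr (by norm_num))
        have h2 := htrans _ _ h1
        rw [show a - (x 1 - 1) = x k + 1 by linarith] at h2
        have h4 : AffNear φ (x k + 1) ((s k : ℝ)) :=
          hA k le_rfl _ (Or.inr (by linarith)) (Or.inl rfl)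
        exact affNear_unique h2 h4
      -- palindromicity of slopes
      have hpalR : ∀ i, i ≤ k → (s i : ℝ) = (s (k - i) : ℝ) := by
        intro i hik
        rcases Nat.eq_zero_or_pos i with rfl | hi0
        · rw [Nat.sub_zero]; exact h0k
        rcases Nat.lt_or_ge i k with hik' | hik'
        · have hxx : x i < x (i + 1) := hx i hi0 hik'
          set p := (x i + x (i + 1)) / 2 with hp
          have hp1 : x i < p := by rw [hp]; linarith
          have hp2 : p < x (i + 1) := by rw [hp]; linarith
          have h1 := hA i (le_of_lt hik') p (Or.inr hp1) (Or.inr hp2)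
          have h2 := htrans _ _ h1
          have e1 := hax i hi0 (le_of_lt hik')
          have e2 := hax (i + 1) (by omega) (by omega)
          rw [show k + 1 - (i + 1) = k - i by omega] at e2
          have h4 : AffNear φ (a - p) ((s (k - i) : ℝ)) := by
            refine hA (k - i) (by omega) _ (Or.inr (by linarith)) (Or.inr ?_)
            rw [show k - i + 1 = k + 1 - i by omega]
            linarith
          exact affNear_unique h2 h4
        · have : i = k := by omega
          subst this
          rw [Nat.sub_self]
          exact h0k.symm
      obtain ⟨i, hik, hne⟩ := hnonpal
      have := hpalR i hik
      exact hne (by exact_mod_cast this)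
  refine ⟨part1, ?_⟩
  -- Part 2
  intro ε a δ b hε hδ hcomm
  have hsk := hsR k le_rfl
  rcases hε with rfl | rfl
  · -- ε = 1
    have hcomm' : ∀ t : ℝ, δ * φ t + b = φ (t + a) := by
      intro t
      have := hcomm t
      rwa [one_mul] at this
    -- δ = 1
    have hδ1 : δ = 1 := by
      set t0 := max (x k) (x k - a) + 1 with ht0
      have h0k : x k < t0 := by
        have := le_max_left (x k) (x k - a); rw [ht0]; linarith
      have h0a : x k < t0 + a := by
        have := le_max_right (x k) (x k - a); rw [ht0]; linarith
      have h1k : x k < t0 + 1 := by linarith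
      have h1a : x k < t0 + 1 + a := by linarith
      have e0 : φ t0 = (s k : ℝ) * t0 + c k := hslope k le_rfl t0 (Or.inr h0k) (Or.inl rfl)
      have e1 : φ (t0 + 1) = (s k : ℝ) * (t0 + 1) + c k :=
        hslope k le_rfl _ (Or.inr h1k) (Or.inl rfl)
      have f0 : φ (t0 + a) = (s k : ℝ) * (t0 + a) + c k :=
        hslope k le_rfl _ (Or.inr h0a) (Or.inl rfl)
      have f1 : φ (t0 + 1 + a) = (s k : ℝ) * (t0 + 1 + a) + c k :=
        hslope k le_rfl _ (Or.inr h1a) (Or.inl rfl)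
      have g0 := hcomm' t0
      have g1 := hcomm' (t0 + 1)
      rw [e0, f0] at g0
      rw [e1, f1] at g1
      have hδs : δ * (s k : ℝ) = (s k : ℝ) := by linear_combination g1 - g0
      rcases hδ with h | h
      · exact h
      · exfalso; rw [h] at hδs; linarith
    subst hδ1
    have Hb : ∀ t : ℝ, φ (t + a) = φ t + b := by
      intro t
      have := hcomm' t
      linarith
    have htransB : ∀ p σ : ℝ, AffNear φ (p + a) σ → AffNear φ p σ := by
      rintro p σ ⟨ε', hε', d, hd⟩
      refine ⟨ε', hε', σ * a + d - b, fun t ht => ?_⟩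
      have h1 : |t + a - (p + a)| < ε' := by
        rw [show t + a - (p + a) = t - p by ring]; exact ht
      have h2 := hd (t + a) h1
      have h3 : φ t = σ * (t + a) + d - b := by
        have := Hb t
        rw [h2] at this
        linarith
      rw [h3]; ring
    have ha0 : a = 0 := by
      by_contra ha0
      rcases lt_or_gt_of_ne ha0 with haneg | hapos
      · -- a < 0 : x 1 + a is not a breakpoint
        have hq : ∀ j, 1 ≤ j → j ≤ k → x 1 + a ≠ x j := by
          intro j h1 h2 heq
          have hle : x 1 ≤ x j := by
            rcases Nat.lt_or_ge 1 j with h | h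
            · exact le_of_lt (hxm 1 j le_rfl h h2)
            · have : j = 1 := by omega
              rw [this]
          linarith
        obtain ⟨i, hik, hl, hr⟩ := hD (x 1 + a) hq
        exact hC 1 le_rfl hk _ (htransB (x 1) _ (hA i hik _ hl hr))
      · -- a > 0 : x k + a is not a breakpoint
        have hq : ∀ j, 1 ≤ j → j ≤ k → x k + a ≠ x j := by
          intro j h1 h2 heq
          have hle : x j ≤ x k := by
            rcases Nat.lt_or_ge j k with h | h
            · exact le_of_lt (hxm j k h1 h le_rfl)
            · have : j = k := by omega
              rw [this]
          linarith
        obtain ⟨i, hik, hl, hr⟩ := hD (x k + a) hq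
        exact hC k hk le_rfl _ (htransB (x k) _ (hA i hik _ hl hr))
    subst ha0
    have hb0 : b = 0 := by
      have := Hb 0
      simp at this
      linarith
    exact ⟨rfl, rfl, rfl, hb0⟩
  · -- ε = -1 : contradicts Part 1
    exfalso
    refine part1 ⟨a, b, δ, hδ, fun t => ?_⟩
    have := hcomm t
    rw [show (-1 : ℝ) * t + a = -t + a by ring] at this
    exact this
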